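/- Derivative-free OptimIST setup: let f : ℝⁿ → ℝ be differentiable with ∇f Lipschitz continuous on ℝⁿ with constant L ∈ (0,∞) and f bounded below with f_* = inf f; let η > 0, ζ > 0; let {x_k} ⊂ ℝⁿ, {ĝ_k} ⊂ ℝⁿ, {δ_k} ⊂ (0,∞) with f_k = f(x_k), g_k = ∇f(x_k), satisfying for every k ≥ 0: (i) f_{k+1} ≤ f_k; (ii) f_{k+1} ≤ max{f_k − ηδ_k², f(x_k − δ_k ĝ_k/‖ĝ_k‖)}, where ĝ_k/‖ĝ_k‖ is taken to be 0 if ĝ_k = 0; (iii) ‖ĝ_k − g_k‖ ≤ ζδ_k; (iv) δ_{k+1} = 2δ_k if both ‖ĝ_k‖ ≥ ηδ_k and f_{k+1} ≤ f_k − ηδ_k², and δ_{k+1} = δ_k/2 otherwise. Then liminf_{k→∞} ‖∇f(x_k)‖ = 0. -/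

import Mathlib

/-! At an unsuccessful iteration the gradient is controlled by the step size: either
`‖ĝₖ‖ < η δₖ`, or the normalised step fails the sufficient-decrease test, which by the descent
lemma forces `‖ĝₖ‖ < (η + ζ + L/2) δₖ`; with the accuracy condition,
`‖∇f xₖ‖ ≤ (η + 2ζ + L/2) δₖ`. If `‖∇f xₖ‖ ≥ ε` eventually, unsuccessful steps thus have
`δₖ ≥ ε / (η + 2ζ + L/2)`, so `δₖ` stays above some `d > 0`. Every successful step then decreases
`f` by at least `η d²`, which can happen only finitely often as `f` is bounded below; from then on
every step halves `δₖ`, driving it to `0`, a contradiction. -/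

open Filter Topology
open scoped RealInnerProductSpace

section Descent

variable {E : Type*} [NormedAddCommGroup E] [InnerProductSpace ℝ E] [CompleteSpace E]
  {f : E → ℝ} {L : ℝ}

theorem hasDerivAt_apply_add_smul (hf : Differentiable ℝ f) (x v : E) (t : ℝ) :
    HasDerivAt (fun s : ℝ => f (x + s • v)) ⟪gradient f (x + t • v), v⟫ t := by
  have hline : HasDerivAt (fun s : ℝ => x + s • v) v t := by
    simpa using ((hasDerivAt_id t).smul_const v).const_add x
  have hgrad := hasGradientAt_iff_hasFDerivAt.1 (hf (x + t • v)).hasGradientAt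
  simpa [Function.comp_def] using hgrad.comp_hasDerivAt t hline

theorem apply_add_le_of_lipschitz_gradient (hf : Differentiable ℝ f)
    (hlip : ∀ y z, ‖gradient f y - gradient f z‖ ≤ L * ‖y - z‖) (x v : E) :
    f (x + v) ≤ f x + ⟪gradient f x, v⟫ + L / 2 * ‖v‖ ^ 2 := by
  set a := ⟪gradient f x, v⟫
  -- `f` on the segment minus its quadratic upper model is antitone
  let g : ℝ → ℝ := fun t => f (x + t • v) - t * a - L * ‖v‖ ^ 2 * t ^ 2 / 2
  have hg (t : ℝ) : HasDerivAt g
      (⟪gradient f (x + t • v) - gradient f x, v⟫ - L * ‖v‖ ^ 2 * t) t := by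
    have hq := ((hasDerivAt_pow 2 t).const_mul (L * ‖v‖ ^ 2)).div_const 2
    refine (((hasDerivAt_apply_add_smul hf x v t).sub
      ((hasDerivAt_id t).mul_const a)).sub hq).congr_deriv ?_
    rw [inner_sub_left]; norm_num only [mul_one]; ring
  have hderiv : ∀ t ∈ interior (Set.Icc (0 : ℝ) 1), deriv g t ≤ 0 := by
    intro t ht
    rw [interior_Icc] at ht
    rw [(hg t).deriv, sub_nonpos]
    calc ⟪gradient f (x + t • v) - gradient f x, v⟫
        ≤ ‖gradient f (x + t • v) - gradient f x‖ * ‖v‖ := real_inner_le_norm _ _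
      _ ≤ L * ‖t • v‖ * ‖v‖ := by
          gcongr
          simpa using hlip (x + t • v) x
      _ = L * ‖v‖ ^ 2 * t := by rw [norm_smul, Real.norm_of_nonneg ht.1.le]; ring
  have hanti := antitoneOn_of_deriv_nonpos (convex_Icc 0 1)
    (fun t _ => (hg t).continuousAt.continuousWithinAt)
    (fun t _ => (hg t).differentiableAt.differentiableWithinAt) hderiv
  have := hanti (Set.left_mem_Icc.2 zero_le_one) (Set.right_mem_Icc.2 zero_le_one) zero_le_one
  simp only [g, one_smul, zero_smul, add_zero, one_mul, zero_mul, one_pow, mul_one,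
    ne_eq, OfNat.ofNat_ne_zero, not_false_eq_true, zero_pow, mul_zero, zero_div, sub_zero] at this
  linarith

theorem apply_sub_div_norm_smul_le (hf : Differentiable ℝ f)
    (hlip : ∀ y z, ‖gradient f y - gradient f z‖ ≤ L * ‖y - z‖) {x ĝ : E} {δ ζ : ℝ}
    (hĝ : ĝ ≠ 0) (hδ : 0 ≤ δ) (hacc : ‖ĝ - gradient f x‖ ≤ ζ * δ) :
    f (x - (δ / ‖ĝ‖) • ĝ) ≤ f x - δ * ‖ĝ‖ + (ζ + L / 2) * δ ^ 2 := by
  have hĝpos : 0 < ‖ĝ‖ := norm_pos_iff.2 hĝ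
  have hcorr : ‖ĝ‖ ^ 2 - ζ * δ * ‖ĝ‖ ≤ ⟪gradient f x, ĝ⟫ := by
    have h := (real_inner_le_norm (ĝ - gradient f x) ĝ).trans
      (mul_le_mul_of_nonneg_right hacc (norm_nonneg ĝ))
    rw [inner_sub_left, real_inner_self_eq_norm_sq] at h
    linarith
  have hinner : ⟪gradient f x, -((δ / ‖ĝ‖) • ĝ)⟫ ≤ -(δ * ‖ĝ‖) + ζ * δ ^ 2 := by
    rw [inner_neg_right, real_inner_smul_right]
    calc -(δ / ‖ĝ‖ * ⟪gradient f x, ĝ⟫)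
        ≤ -(δ / ‖ĝ‖ * (‖ĝ‖ ^ 2 - ζ * δ * ‖ĝ‖)) := by gcongr
      _ = -(δ * ‖ĝ‖) + ζ * δ ^ 2 := by field_simp; ring
  have hnorm : ‖-((δ / ‖ĝ‖) • ĝ)‖ = δ := by
    rw [norm_neg, norm_smul, Real.norm_of_nonneg (by positivity), div_mul_cancel₀ _ hĝpos.ne']
  have h := apply_add_le_of_lipschitz_gradient hf hlip x (-((δ / ‖ĝ‖) • ĝ))
  rw [← sub_eq_add_neg, hnorm] at h
  linarith

theorem norm_gradient_le_of_not_sufficient_decrease (hf : Differentiable ℝ f) (hL : 0 ≤ L)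
    (hlip : ∀ y z, ‖gradient f y - gradient f z‖ ≤ L * ‖y - z‖) {x x' ĝ : E} {δ η ζ : ℝ}
    (hη : 0 < η) (hδ : 0 < δ)
    (hstep : f x' ≤ max (f x - η * δ ^ 2) (f (x - (δ / ‖ĝ‖) • ĝ)))
    (hacc : ‖ĝ - gradient f x‖ ≤ ζ * δ)
    (hfail : ¬(η * δ ≤ ‖ĝ‖ ∧ f x' ≤ f x - η * δ ^ 2)) :
    ‖gradient f x‖ ≤ (η + 2 * ζ + L / 2) * δ := by
  have hgrad : ‖gradient f x‖ ≤ ‖ĝ‖ + ζ * δ := by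
    have := norm_le_norm_add_norm_sub' (gradient f x) ĝ
    rw [norm_sub_rev] at this
    linarith
  have hζδ : 0 ≤ ζ * δ := (norm_nonneg _).trans hacc
  suffices hĝle : ‖ĝ‖ ≤ (η + ζ + L / 2) * δ by linarith
  by_cases hlarge : η * δ ≤ ‖ĝ‖
  · have hĝ : ĝ ≠ 0 := norm_pos_iff.1 ((mul_pos hη hδ).trans_le hlarge)
    have hnodecr : f x - η * δ ^ 2 < f (x - (δ / ‖ĝ‖) • ĝ) := by
      have := lt_of_not_ge fun h => hfail ⟨hlarge, h⟩
      exact (lt_max_iff.1 (this.trans_le hstep)).resolve_left (lt_irrefl _)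
    have := apply_sub_div_norm_smul_le hf hlip hĝ hδ.le hacc
    nlinarith
  · nlinarith

end Descent

theorem min_le_of_update {S : Prop} {δ δ' c : ℝ} (hδ : 0 < δ)
    (hupd : (S → δ' = 2 * δ) ∧ (¬S → δ' = δ / 2)) (hfail : ¬S → c ≤ δ) :
    min δ (c / 2) ≤ δ' := by
  by_cases hS : S
  · rw [hupd.1 hS]
    linarith [min_le_left δ (c / 2)]
  · rw [hupd.2 hS]
    exact (min_le_right _ _).trans (by linarith [hfail hS])

theorem exists_pos_eventually_le_of_min_le_succ {δ : ℕ → ℝ} (hδ : ∀ k, 0 < δ k) {a : ℝ}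
    (ha : 0 < a) (h : ∀ᶠ k in atTop, min (δ k) a ≤ δ (k + 1)) :
    ∃ d > 0, ∀ᶠ k in atTop, d ≤ δ k := by
  obtain ⟨N, hN⟩ := eventually_atTop.1 h
  refine ⟨min (δ N) a, lt_min (hδ N) ha, eventually_atTop.2 ⟨N, fun k hk => ?_⟩⟩
  induction k, hk using Nat.le_induction with
  | base => exact min_le_left _ _
  | succ k hk ih => exact (le_min ih (min_le_right _ _)).trans (hN k hk)

theorem eventually_sub_lt_succ_of_antitone {F : ℕ → ℝ} (hF : Antitone F)
    (hbdd : BddBelow (Set.range F)) {a : ℝ} (ha : 0 < a) :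
    ∀ᶠ k in atTop, F k - a < F (k + 1) := by
  have hlim := tendsto_atTop_ciInf hF hbdd
  have hdiff : Tendsto (fun k => F k - F (k + 1)) atTop (𝓝 0) := by
    simpa using hlim.sub ((tendsto_add_atTop_iff_nat 1).2 hlim)
  filter_upwards [hdiff.eventually (gt_mem_nhds ha)] with k hk
  linarith

theorem tendsto_zero_of_eventually_eq_mul {δ : ℕ → ℝ} {r : ℝ} (hr : |r| < 1)
    (h : ∀ᶠ k in atTop, δ (k + 1) = r * δ k) : Tendsto δ atTop (𝓝 0) := by
  obtain ⟨N, hN⟩ := eventually_atTop.1 h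
  have hgeom (j : ℕ) : δ (j + N) = r ^ j * δ N := by
    induction j with
    | zero => simp
    | succ j ih => rw [Nat.add_right_comm, hN _ (Nat.le_add_left N j), ih, pow_succ']; ring
  rw [← tendsto_add_atTop_iff_nat N]
  simpa [hgeom] using (tendsto_pow_atTop_nhds_zero_of_abs_lt_one hr).mul_const (δ N)

theorem liminf_eq_zero_of_frequently_lt {ι : Type*} {l : Filter ι} {u : ι → ℝ}
    (hu : ∀ i, 0 ≤ u i) (h : ∀ ε > 0, ∃ᶠ i in l, u i < ε) : liminf u l = 0 := by
  have hbdd : IsBoundedUnder (· ≥ ·) l u := isBoundedUnder_of ⟨0, hu⟩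
  refine le_antisymm (le_of_forall_pos_le_add fun ε hε => ?_) ?_
  · simpa using liminf_le_of_frequently_le ((h ε hε).mono fun i hi => hi.le) hbdd
  · exact le_liminf_of_le
      (IsCoboundedUnder.of_frequently_le ((h 1 one_pos).mono fun i hi => hi.le))
      (Eventually.of_forall hu)

/-- Global convergence of the derivative-free OptimIST framework (Algorithm 3.2):
`liminf ‖∇f (x k)‖ = 0`. -/
theorem optimist_liminf_gradient_zero {n : ℕ}
    (f : EuclideanSpace ℝ (Fin n) → ℝ)
    (hdiff : Differentiable ℝ f)
    (L : ℝ) (hL : 0 < L)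
    (hlip : ∀ y z, ‖gradient f y - gradient f z‖ ≤ L * ‖y - z‖)
    (hbdd : BddBelow (Set.range f))
    (η ζ : ℝ) (hη : 0 < η) (hζ : 0 < ζ)
    (x ghat : ℕ → EuclideanSpace ℝ (Fin n)) (δ : ℕ → ℝ) (hδ : ∀ k, 0 < δ k)
    (hmono : ∀ k, f (x (k + 1)) ≤ f (x k))
    (hsd : ∀ k, f (x (k + 1)) ≤
      max (f (x k) - η * δ k ^ 2) (f (x k - (δ k / ‖ghat k‖) • ghat k)))
    (hacc : ∀ k, ‖ghat k - gradient f (x k)‖ ≤ ζ * δ k)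
    (hupd : ∀ k,
      ((η * δ k ≤ ‖ghat k‖ ∧ f (x (k + 1)) ≤ f (x k) - η * δ k ^ 2) → δ (k + 1) = 2 * δ k) ∧
      (¬(η * δ k ≤ ‖ghat k‖ ∧ f (x (k + 1)) ≤ f (x k) - η * δ k ^ 2) → δ (k + 1) = δ k / 2)) :
    Filter.liminf (fun k => ‖gradient f (x k)‖) atTop = 0 := by
  refine liminf_eq_zero_of_frequently_lt (fun k => norm_nonneg _) fun ε hε => ?_
  by_contra hsmall
  have hgrad : ∀ᶠ k in atTop, ε ≤ ‖gradient f (x k)‖ := by simpa using hsmall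
  have hC : 0 < η + 2 * ζ + L / 2 := by positivity
  have hmin : ∀ᶠ k in atTop, min (δ k) (ε / (η + 2 * ζ + L / 2) / 2) ≤ δ (k + 1) := by
    filter_upwards [hgrad] with k hk
    exact min_le_of_update (hδ k) (hupd k) fun hfail => (div_le_iff₀ hC).2 <| hk.trans <| by
      simpa [mul_comm] using norm_gradient_le_of_not_sufficient_decrease hdiff hL.le hlip hη
        (hδ k) (hsd k) (hacc k) hfail
  obtain ⟨d, hd, hδd⟩ := exists_pos_eventually_le_of_min_le_succ hδ (by positivity) hmin
  have hfail : ∀ᶠ k in atTop,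
      ¬(η * δ k ≤ ‖ghat k‖ ∧ f (x (k + 1)) ≤ f (x k) - η * δ k ^ 2) := by
    filter_upwards [eventually_sub_lt_succ_of_antitone (F := fun k => f (x k))
      (antitone_nat_of_succ_le hmono) (hbdd.mono (Set.range_comp_subset_range x f))
      (by positivity : 0 < η * d ^ 2), hδd] with k hdecr hdk hsucc
    linarith [hsucc.2, mul_le_mul_of_nonneg_left (pow_le_pow_left₀ hd.le hdk 2) hη.le]
  have hδ_lim : Tendsto δ atTop (𝓝 0) := by
    refine tendsto_zero_of_eventually_eq_mul (r := 1 / 2) (by norm_num) ?_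
    filter_upwards [hfail] with k hk
    rw [(hupd k).2 hk]; ring
  exact hd.not_ge (ge_of_tendsto hδ_lim hδd)
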